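/- The Cayley graph of τ_m on (ZMod 2)^{2m} (vertices x,y adjacent iff τ_m(x+y)=1) is a strongly regular graph with parameters v = 4^m, k = 2^{2m−1} − 2^{m−1}, λ = μ = 2^{2m−2} − 2^{m−1}. -/

import Mathlib

/-- The sign-of-square function `σ_m` on bit strings: the parity of the number of
bit-pairs equal to `01`. -/
def sigma (m : ℕ) (i : Fin (2 * m) → ZMod 2) : ZMod 2 :=
  ∑ j : Fin m,
    if i ⟨2 * j.1, by have := j.2; omega⟩ = 0 ∧ i ⟨2 * j.1 + 1, by have := j.2; omega⟩ = 1
    then 1 else 0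

/-- The tail of a bit string after removing its leading bit-pair. -/
def tail2 (m : ℕ) (i : Fin (2 * (m + 1)) → ZMod 2) (j : Fin (2 * m)) : ZMod 2 :=
  i ⟨j.1 + 2, by have := j.2; omega⟩

/-- The non-diagonal-symmetry function `τ_m`, defined recursively:
`τ_m(00⊙i) = τ_{m-1}(i)`, `τ_m(01⊙i) = σ_{m-1}(i)`, `τ_m(10⊙i) = σ_{m-1}(i) + 1`,
`τ_m(11⊙i) = τ_{m-1}(i)`; in particular `τ_1(10) = 1` and `τ_1 = 0` otherwise. -/
def tau : (m : ℕ) → (Fin (2 * m) → ZMod 2) → ZMod 2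
  | 0, _ => 0
  | m + 1, i =>
    if i ⟨0, by omega⟩ = 0 ∧ i ⟨1, by omega⟩ = 0 then tau m (tail2 m i)
    else if i ⟨0, by omega⟩ = 0 ∧ i ⟨1, by omega⟩ = 1 then sigma m (tail2 m i)
    else if i ⟨0, by omega⟩ = 1 ∧ i ⟨1, by omega⟩ = 0 then sigma m (tail2 m i) + 1
    else tau m (tail2 m i)

/-- The Cayley graph of a Boolean function `f`: vertices `x ≠ y` adjacent iff `f (x + y) = 1`. -/
def cayley (n : ℕ) (f : (Fin n → ZMod 2) → ZMod 2) : SimpleGraph (Fin n → ZMod 2) where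
  Adj x y := x ≠ y ∧ f (x + y) = 1
  symm := ⟨by intro x y h; exact ⟨h.1.symm, by rw [add_comm]; exact h.2⟩⟩
  loopless := ⟨by intro x h; exact h.1 rfl⟩

instance (n : ℕ) (f : (Fin n → ZMod 2) → ZMod 2) : DecidableRel (cayley n f).Adj :=
  fun _ _ => instDecidableAnd

/-!
`τ_m` is bent and vanishes at `0`, and the Cayley graph of such a function is strongly regular
with `λ = μ`. Bentness is expressed through the autocorrelation `a ↦ ∑ₓ (-1)^(f x + f (x + a))`,
which vanishes for `a ≠ 0` exactly when every derivative is balanced; the number of common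
neighbours of two distinct vertices is then determined by `2^n` and the sign sum `∑ₓ (-1)^(f x)`.

Splitting off the leading bit pair, the autocorrelation of `σ_{m+1}` is that of `σ_m` times that
of the bent two-bit function `(c₀ + 1) c₁`, while the autocorrelation of `τ_{m+1}` at `d₀d₁ ⊙ s` is
`2 (A_τ(s) + (-1)^d₀ A_σ(s))` if `d₀ = d₁` and `0` otherwise, the cross terms between `τ_m` and
`σ_m` cancelling in pairs. By induction both autocorrelations equal `4^m [a = 0]`, and the sign sum
of `τ_m` is `2^m`.
-/

open Finset

lemma zmod_two_eq_zero_or_eq_one (x : ZMod 2) : x = 0 ∨ x = 1 := by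
  revert x; decide

def zmodSign (b : ZMod 2) : ℤ := if b = 0 then 1 else -1

@[simp] lemma zmodSign_zero : zmodSign 0 = 1 := rfl

@[simp] lemma zmodSign_one : zmodSign 1 = -1 := rfl

lemma zmodSign_add (b c : ZMod 2) : zmodSign (b + c) = zmodSign b * zmodSign c := by
  revert b c; decide

section Correlation

variable {V : Type*} [Fintype V]

def signSum (f : V → ZMod 2) : ℤ := ∑ x, zmodSign (f x)

lemma signSum_add_const (f : V → ZMod 2) (c : ZMod 2) :
    signSum (fun x => f x + c) = zmodSign c * signSum f := by
  simp only [signSum, zmodSign_add, mul_sum, mul_comm]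

lemma two_mul_card_filter_eq_one (f : V → ZMod 2) :
    (2 * #{x | f x = 1} : ℤ) = Fintype.card V - signSum f := by
  have hsign : ∀ b : ZMod 2, zmodSign b = 1 - 2 * if b = 1 then 1 else 0 := by decide
  simp only [signSum, hsign, sum_sub_distrib, ← mul_sum, sum_boole, sum_const, card_univ]
  simp

variable [AddGroup V]

def crossCorrelation (g h : V → ZMod 2) (a : V) : ℤ :=
  ∑ x, zmodSign (g x) * zmodSign (h (x + a))

def autoCorrelation (f : V → ZMod 2) : V → ℤ := crossCorrelation f f

@[simp] lemma crossCorrelation_self (f : V → ZMod 2) : crossCorrelation f f = autoCorrelation f :=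
  rfl

lemma crossCorrelation_add_const (g h : V → ZMod 2) (c c' : ZMod 2) (a : V) :
    crossCorrelation (fun x => g x + c) (fun x => h x + c') a =
      zmodSign c * zmodSign c' * crossCorrelation g h a := by
  simp only [crossCorrelation, zmodSign_add, mul_sum]
  exact sum_congr rfl fun _ _ => by ring

lemma crossCorrelation_add_one_left (g h : V → ZMod 2) (a : V) :
    crossCorrelation (fun x => g x + 1) h a = -crossCorrelation g h a := by
  simpa using crossCorrelation_add_const g h 1 0 a

lemma crossCorrelation_add_one_right (g h : V → ZMod 2) (a : V) :
    crossCorrelation g (fun x => h x + 1) a = -crossCorrelation g h a := by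
  simpa using crossCorrelation_add_const g h 0 1 a

lemma four_mul_card_filter_eq_one_and (f : V → ZMod 2) (a : V) :
    (4 * #{x | f x = 1 ∧ f (x + a) = 1} : ℤ) =
      Fintype.card V - 2 * signSum f + autoCorrelation f a := by
  have hsign : ∀ b c : ZMod 2, (4 * if b = 1 ∧ c = 1 then 1 else 0 : ℤ) =
      1 - zmodSign b - zmodSign c + zmodSign b * zmodSign c := by decide
  have hshift : ∑ x, zmodSign (f (x + a)) = signSum f :=
    Fintype.sum_equiv (Equiv.addRight a) _ _ fun _ => rfl
  rw [natCast_card_filter, mul_sum]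
  simp only [hsign, sum_add_distrib, sum_sub_distrib, hshift, autoCorrelation, crossCorrelation,
    signSum, sum_const, card_univ]
  simp only [nsmul_eq_mul, mul_one]
  ring

end Correlation

section Cayley

variable {n : ℕ} {f : (Fin n → ZMod 2) → ZMod 2}

lemma cayley_adj_iff (hf : f 0 = 0) {x y : Fin n → ZMod 2} :
    (cayley n f).Adj x y ↔ f (x + y) = 1 := by
  refine ⟨And.right, fun h => ⟨?_, h⟩⟩
  rintro rfl
  simp [ZModModule.add_self, hf] at h

lemma cayley_degree (hf : f 0 = 0) (v : Fin n → ZMod 2) :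
    (cayley n f).degree v = #{x | f x = 1} := by
  rw [← SimpleGraph.card_neighborFinset_eq_degree]
  refine card_nbij' (v + ·) (v + ·) (fun x hx => ?_) (fun x hx => ?_) (fun x _ => ?_)
    (fun x _ => ?_) <;>
    simp_all [cayley_adj_iff hf, ← add_assoc, ZModModule.add_self]

lemma cayley_card_commonNeighbors (hf : f 0 = 0) (v w : Fin n → ZMod 2) :
    Fintype.card ((cayley n f).commonNeighbors v w) = #{x | f x = 1 ∧ f (x + (v + w)) = 1} := by
  have hshift (x : Fin n → ZMod 2) : v + x + (v + w) = w + x := by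
    rw [add_comm v, ZModModule.add_add_add_cancel, add_comm]
  have hswap (x : Fin n → ZMod 2) : w + (v + x) = x + (v + w) := by abel
  rw [← Set.toFinset_card]
  refine card_nbij' (v + ·) (v + ·) (fun x hx => ?_) (fun x hx => ?_) (fun x _ => ?_)
    (fun x _ => ?_) <;>
    simp_all [SimpleGraph.mem_commonNeighbors, cayley_adj_iff hf, ← add_assoc, ZModModule.add_self]

lemma cayley_isSRGWith (hf : f 0 = 0) {k l : ℕ} (hk : #{x | f x = 1} = k)
    (hl : ∀ a ≠ 0, #{x | f x = 1 ∧ f (x + a) = 1} = l) :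
    (cayley n f).IsSRGWith (2 ^ n) k l l := by
  have hcommon (v w : Fin n → ZMod 2) (hvw : v ≠ w) :
      Fintype.card ((cayley n f).commonNeighbors v w) = l := by
    rw [cayley_card_commonNeighbors hf]
    exact hl _ fun h => hvw (by rwa [← ZModModule.sub_eq_add, sub_eq_zero] at h)
  exact
    { card := by simp
      regular := fun v => (cayley_degree hf v).trans hk
      of_adj := fun v w hvw => hcommon v w hvw.ne
      of_not_adj := fun v w hvw _ => hcommon v w hvw }

end Cayley

section BitString

variable {m : ℕ}

def cons2 (m : ℕ) (c0 c1 : ZMod 2) (t : Fin (2 * m) → ZMod 2) : Fin (2 * (m + 1)) → ZMod 2 :=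
  fun j => if h0 : j.1 = 0 then c0 else if h1 : j.1 = 1 then c1 else t ⟨j.1 - 2, by omega⟩

@[simp] lemma tail2_cons2 (c0 c1 : ZMod 2) (t : Fin (2 * m) → ZMod 2) :
    tail2 m (cons2 m c0 c1 t) = t := by
  funext j
  simp [tail2, cons2]

lemma cons2_add (c0 c1 d0 d1 : ZMod 2) (t s : Fin (2 * m) → ZMod 2) :
    cons2 m c0 c1 t + cons2 m d0 d1 s = cons2 m (c0 + d0) (c1 + d1) (t + s) := by
  funext j
  simp only [Pi.add_apply, cons2]
  split_ifs <;> rfl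

def consEquiv (m : ℕ) :
    (ZMod 2 × ZMod 2) × (Fin (2 * m) → ZMod 2) ≃ (Fin (2 * (m + 1)) → ZMod 2) where
  toFun p := cons2 m p.1.1 p.1.2 p.2
  invFun x := ((x ⟨0, by omega⟩, x ⟨1, by omega⟩), tail2 m x)
  left_inv p := by simp [cons2]
  right_inv x := by
    funext ⟨j, hj⟩
    simp only [cons2, tail2]
    split_ifs <;> congr 1 <;> ext <;> simp <;> omega

lemma cons2_zero : cons2 m 0 0 0 = 0 := by
  funext j
  simp only [cons2]
  split_ifs <;> rfl

lemma cons2_eq_zero_iff (c0 c1 : ZMod 2) (t : Fin (2 * m) → ZMod 2) :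
    cons2 m c0 c1 t = 0 ↔ c0 = 0 ∧ c1 = 0 ∧ t = 0 := by
  rw [← cons2_zero]
  exact ((consEquiv m).injective.eq_iff (a := ((c0, c1), t)) (b := ((0, 0), 0))).trans
    (by simp [and_assoc])

lemma sum_zmod_two {M : Type*} [AddCommMonoid M] (f : ZMod 2 → M) : ∑ c, f c = f 0 + f 1 :=
  Fin.sum_univ_two f

lemma sum_cons2 {M : Type*} [AddCommMonoid M] (F : (Fin (2 * (m + 1)) → ZMod 2) → M) :
    ∑ x, F x = ∑ c0, ∑ c1, ∑ t, F (cons2 m c0 c1 t) := by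
  rw [← (consEquiv m).sum_comp, Fintype.sum_prod_type, Fintype.sum_prod_type]
  rfl

lemma signSum_cons2 (F : (Fin (2 * (m + 1)) → ZMod 2) → ZMod 2) :
    signSum F = ∑ c0, ∑ c1, signSum fun t => F (cons2 m c0 c1 t) :=
  sum_cons2 _

lemma crossCorrelation_cons2 (F G : (Fin (2 * (m + 1)) → ZMod 2) → ZMod 2) (d0 d1 : ZMod 2)
    (s : Fin (2 * m) → ZMod 2) :
    crossCorrelation F G (cons2 m d0 d1 s) = ∑ c0, ∑ c1, crossCorrelation
      (fun t => F (cons2 m c0 c1 t)) (fun t => G (cons2 m (c0 + d0) (c1 + d1) t)) s := by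
  simp only [crossCorrelation]
  rw [sum_cons2]
  simp only [cons2_add]

lemma card_bitString (m : ℕ) : Fintype.card (Fin (2 * m) → ZMod 2) = 4 ^ m := by
  simp [pow_mul]

end BitString

lemma sigma_cons2 (m : ℕ) (c0 c1 : ZMod 2) (t : Fin (2 * m) → ZMod 2) :
    sigma (m + 1) (cons2 m c0 c1 t) = sigma m t + (c0 + 1) * c1 := by
  rw [sigma, Fin.sum_univ_succ, add_comm]
  congr 1
  change (if c0 = 0 ∧ c1 = 1 then 1 else 0) = _
  revert c0 c1; decide

lemma tau_cons2 (m : ℕ) (c0 c1 : ZMod 2) (t : Fin (2 * m) → ZMod 2) :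
    tau (m + 1) (cons2 m c0 c1 t) = if c0 = c1 then tau m t else sigma m t + c0 := by
  rw [tau, tail2_cons2]
  change (if c0 = 0 ∧ c1 = 0 then _ else if c0 = 0 ∧ c1 = 1 then _
    else if c0 = 1 ∧ c1 = 0 then _ else _) = _
  rcases zmod_two_eq_zero_or_eq_one c0 with rfl | rfl <;>
    rcases zmod_two_eq_zero_or_eq_one c1 with rfl | rfl <;> simp

lemma tau_zero (m : ℕ) : tau m 0 = 0 := by
  induction m with
  | zero => rfl
  | succ m ih => rw [← cons2_zero, tau_cons2, if_pos rfl, ih]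

theorem autoCorrelation_sigma (m : ℕ) (a : Fin (2 * m) → ZMod 2) :
    autoCorrelation (sigma m) a = if a = 0 then 4 ^ m else 0 := by
  induction m with
  | zero =>
    obtain rfl : a = 0 := Subsingleton.elim (α := Fin 0 → ZMod 2) a 0
    simp [autoCorrelation, crossCorrelation, sigma]
  | succ m ih =>
    obtain ⟨⟨⟨d0, d1⟩, s⟩, rfl⟩ := (consEquiv m).surjective a
    -- the two-bit function `(c₀ + 1) c₁` is bent
    have hpair : ∑ c0 : ZMod 2, ∑ c1 : ZMod 2,
        zmodSign ((c0 + 1) * c1) * zmodSign ((c0 + d0 + 1) * (c1 + d1)) =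
          if d0 = 0 ∧ d1 = 0 then 4 else 0 := by
      revert d0 d1; decide
    change crossCorrelation _ _ (cons2 m d0 d1 s) = if cons2 m d0 d1 s = 0 then _ else _
    simp only [crossCorrelation_cons2, sigma_cons2, crossCorrelation_add_const, ← sum_mul]
    rw [hpair, ← autoCorrelation, ih]
    simp only [cons2_eq_zero_iff]
    split_ifs <;> simp_all [pow_succ, mul_comm]

lemma autoCorrelation_tau_cons2 (m : ℕ) (d0 d1 : ZMod 2) (s : Fin (2 * m) → ZMod 2) :
    autoCorrelation (tau (m + 1)) (cons2 m d0 d1 s) = if d0 = d1 then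
      2 * (autoCorrelation (tau m) s + zmodSign d0 * autoCorrelation (sigma m) s) else 0 := by
  have h11 : (1 : ZMod 2) + 1 = 0 := rfl
  rw [autoCorrelation, crossCorrelation_cons2]
  simp only [tau_cons2, sum_zmod_two]
  rcases zmod_two_eq_zero_or_eq_one d0 with rfl | rfl <;>
    rcases zmod_two_eq_zero_or_eq_one d1 with rfl | rfl <;>
    simp [h11, crossCorrelation_add_one_left, crossCorrelation_add_one_right]
    <;> ring

theorem autoCorrelation_tau (m : ℕ) (a : Fin (2 * m) → ZMod 2) :
    autoCorrelation (tau m) a = if a = 0 then 4 ^ m else 0 := by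
  induction m with
  | zero =>
    obtain rfl : a = 0 := Subsingleton.elim (α := Fin 0 → ZMod 2) a 0
    simp [autoCorrelation, crossCorrelation, tau]
  | succ m ih =>
    obtain ⟨⟨⟨d0, d1⟩, s⟩, rfl⟩ := (consEquiv m).surjective a
    change autoCorrelation _ (cons2 m d0 d1 s) = if cons2 m d0 d1 s = 0 then _ else _
    rw [autoCorrelation_tau_cons2, ih, autoCorrelation_sigma]
    simp only [cons2_eq_zero_iff]
    rcases zmod_two_eq_zero_or_eq_one d0 with rfl | rfl <;>
      rcases zmod_two_eq_zero_or_eq_one d1 with rfl | rfl <;>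
      split_ifs <;> simp_all [pow_succ', ← two_mul, ← mul_assoc]

theorem signSum_tau (m : ℕ) : signSum (tau m) = 2 ^ m := by
  induction m with
  | zero => rfl
  | succ m ih =>
    rw [signSum_cons2]
    simp only [tau_cons2, sum_zmod_two]
    simp [signSum_add_const, ih, pow_succ]
    ring

theorem card_tau_eq_one (m : ℕ) : #{x | tau m x = 1} = 2 ^ (2 * m - 1) - 2 ^ (m - 1) := by
  have h := two_mul_card_filter_eq_one (tau m)
  rw [signSum_tau, card_bitString] at h
  rcases m with _ | k
  · simpa using h
  · have hle : 2 ^ k ≤ 2 ^ (2 * k + 1) := Nat.pow_le_pow_right (by norm_num) (by omega)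
    rw [show 2 * (k + 1) - 1 = 2 * k + 1 by omega, Nat.add_sub_cancel]
    zify [hle]
    push_cast [pow_succ, pow_mul] at h ⊢
    linarith

theorem card_tau_eq_one_and (m : ℕ) {a : Fin (2 * m) → ZMod 2} (ha : a ≠ 0) :
    #{x | tau m x = 1 ∧ tau m (x + a) = 1} = 2 ^ (2 * m - 2) - 2 ^ (m - 1) := by
  have h := four_mul_card_filter_eq_one_and (tau m) a
  rw [signSum_tau, autoCorrelation_tau, if_neg ha, card_bitString] at h
  rcases m with _ | k
  · exact absurd (Subsingleton.elim (α := Fin 0 → ZMod 2) a 0) ha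
  · have hle : 2 ^ k ≤ 2 ^ (2 * k) := Nat.pow_le_pow_right (by norm_num) (by omega)
    rw [show 2 * (k + 1) - 2 = 2 * k by omega, Nat.add_sub_cancel]
    zify [hle]
    push_cast [pow_succ, pow_mul] at h ⊢
    linarith

theorem cayley_tau_isSRG_general (m : ℕ) :
    (cayley (2 * m) (tau m)).IsSRGWith (4 ^ m) (2 ^ (2 * m - 1) - 2 ^ (m - 1))
      (2 ^ (2 * m - 2) - 2 ^ (m - 1)) (2 ^ (2 * m - 2) - 2 ^ (m - 1)) := by
  have h := cayley_isSRGWith (tau_zero m) (card_tau_eq_one m) fun _ ha => card_tau_eq_one_and m ha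
  rwa [pow_mul, show (2 : ℕ) ^ 2 = 4 by norm_num] at h

/-- The Cayley graph of `τ_m` is strongly regular with parameters
`v = 4^m`, `k = 2^{2m-1} - 2^{m-1}`, `λ = μ = 2^{2m-2} - 2^{m-1}`. -/
theorem cayley_tau_isSRG (m : ℕ) (hm : 1 ≤ m) :
    (cayley (2 * m) (tau m)).IsSRGWith (4 ^ m) (2 ^ (2 * m - 1) - 2 ^ (m - 1))
      (2 ^ (2 * m - 2) - 2 ^ (m - 1)) (2 ^ (2 * m - 2) - 2 ^ (m - 1)) :=
  cayley_tau_isSRG_general m
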